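/- Let κ > 0, α_κ = 1/(4+2κ), and S(y) = ∫_{α_κ}^{y} dx/(x(1-x)^{1+κ}) with inverse S^{-1}. Then 1 - S^{-1}(u) ~ (κ u)^{-1/κ} as u → +∞, i.e., lim_{u→∞} (1 - S^{-1}(u))·(κu)^{1/κ} = 1. -/

import Mathlib

/-!
Since `1/x → 1` as `x → 1`, the density `1 / (x (1-x)^(1+κ))` is squeezed on `[c, 1)` between
`(1-x)^(-(1+κ))` and `c⁻¹ (1-x)^(-(1+κ))`, whose primitive is `(1-x)^(-κ) / κ`. Hence
`κ S(y) (1-y)^κ` has all its limit points as `y → 1⁻` in `[1, 1/c]` for every `c < 1`, so it tends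
to `1`. Since `S⁻¹(u) → 1⁻` as `u → ∞`, this gives `κ u (1 - S⁻¹(u))^κ → 1`; take the `1/κ`-th power.
-/

open MeasureTheory Real Filter Set Topology

noncomputable def jacobiScaleDensity (κ x : ℝ) : ℝ := 1 / (x * (1 - x) ^ (1 + κ))

noncomputable def jacobiScale (κ a y : ℝ) : ℝ := ∫ x in a..y, jacobiScaleDensity κ x

section JacobiScale

variable {κ : ℝ}

lemma jacobiScaleDensity_pos {x : ℝ} (hx : x ∈ Ioo (0 : ℝ) 1) : 0 < jacobiScaleDensity κ x :=
  one_div_pos.mpr (mul_pos hx.1 (rpow_pos_of_pos (sub_pos.mpr hx.2) _))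

lemma jacobiScaleDensity_eq_div {x : ℝ} (hx : x ∈ Ioo (0 : ℝ) 1) :
    jacobiScaleDensity κ x = (1 - x) ^ (-(1 + κ)) / x := by
  rw [jacobiScaleDensity, rpow_neg (sub_pos.mpr hx.2).le]
  field_simp

lemma continuousOn_jacobiScaleDensity : ContinuousOn (jacobiScaleDensity κ) (Ioo 0 1) :=
  continuousOn_const.div
    (continuousOn_id.mul ((continuousOn_const.sub continuousOn_id).rpow_const
      fun _ hx => Or.inl (sub_pos.mpr hx.2).ne'))
    fun _ hx => (mul_pos hx.1 (rpow_pos_of_pos (sub_pos.mpr hx.2) _)).ne'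

lemma intervalIntegrable_jacobiScaleDensity {a b : ℝ} (ha : a ∈ Ioo (0 : ℝ) 1)
    (hb : b ∈ Ioo (0 : ℝ) 1) : IntervalIntegrable (jacobiScaleDensity κ) volume a b :=
  (continuousOn_jacobiScaleDensity.mono (ordConnected_Ioo.uIcc_subset ha hb)).intervalIntegrable

lemma jacobiScale_sub_jacobiScale {a b c : ℝ} (ha : a ∈ Ioo (0 : ℝ) 1) (hb : b ∈ Ioo (0 : ℝ) 1)
    (hc : c ∈ Ioo (0 : ℝ) 1) :
    jacobiScale κ a c - jacobiScale κ a b = ∫ x in b..c, jacobiScaleDensity κ x :=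
  intervalIntegral.integral_interval_sub_left (intervalIntegrable_jacobiScaleDensity ha hc)
    (intervalIntegrable_jacobiScaleDensity ha hb)

lemma monotoneOn_jacobiScale {a : ℝ} (ha : a ∈ Ioo (0 : ℝ) 1) :
    MonotoneOn (jacobiScale κ a) (Ioo 0 1) := by
  intro y hy z hz hyz
  have hdiff := jacobiScale_sub_jacobiScale (κ := κ) ha hy hz
  have hnonneg : 0 ≤ ∫ x in y..z, jacobiScaleDensity κ x :=
    intervalIntegral.integral_nonneg hyz fun x hx =>
      (jacobiScaleDensity_pos ⟨hy.1.trans_le hx.1, hx.2.trans_lt hz.2⟩).le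
  linarith

lemma integral_one_sub_rpow_neg (hκ : κ ≠ 0) {c y : ℝ} (hc : c < 1) (hy : y < 1) :
    ∫ x in c..y, (1 - x) ^ (-(1 + κ)) = ((1 - y) ^ (-κ) - (1 - c) ^ (-κ)) / κ := by
  have hzero : (0 : ℝ) ∉ uIcc (1 - y) (1 - c) := fun h =>
    (lt_min (sub_pos.mpr hy) (sub_pos.mpr hc)).not_ge h.1
  rw [intervalIntegral.integral_comp_sub_left (fun x => x ^ (-(1 + κ))),
    integral_rpow (Or.inr ⟨by contrapose! hκ; linarith, hzero⟩),
    show -(1 + κ) + 1 = -κ by ring, div_neg, ← neg_div, neg_sub]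

lemma jacobiScaleDensity_integral_bounds (hκ : 0 < κ) {c y : ℝ} (hc : 0 < c) (hcy : c ≤ y)
    (hy : y < 1) :
    1 - (1 - c) ^ (-κ) * (1 - y) ^ κ ≤ κ * (∫ x in c..y, jacobiScaleDensity κ x) * (1 - y) ^ κ ∧
      κ * (∫ x in c..y, jacobiScaleDensity κ x) * (1 - y) ^ κ ≤
        (1 - (1 - c) ^ (-κ) * (1 - y) ^ κ) / c := by
  have hIcc : ∀ x ∈ Icc c y, x ∈ Ioo (0 : ℝ) 1 := fun x hx => ⟨hc.trans_le hx.1, hx.2.trans_lt hy⟩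
  have hf := intervalIntegrable_jacobiScaleDensity (κ := κ) (hIcc c ⟨le_rfl, hcy⟩)
    (hIcc y ⟨hcy, le_rfl⟩)
  have hc1 : c < 1 := hcy.trans_lt hy
  have hg : IntervalIntegrable (fun x : ℝ => (1 - x) ^ (-(1 + κ))) volume c y :=
    (((continuousOn_const.sub continuousOn_id).rpow_const fun _ (hx : _ ∈ Iio 1) =>
      Or.inl (sub_pos.mpr hx).ne').mono (ordConnected_Iio.uIcc_subset hc1 hy)).intervalIntegrable
  have hlower : ∫ x in c..y, (1 - x) ^ (-(1 + κ)) ≤ ∫ x in c..y, jacobiScaleDensity κ x :=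
    intervalIntegral.integral_mono_on hcy hg hf fun x hx => by
      rw [jacobiScaleDensity_eq_div (hIcc x hx)]
      exact le_div_self (rpow_nonneg (sub_pos.mpr (hIcc x hx).2).le _) (hIcc x hx).1
        (hIcc x hx).2.le
  have hupper : ∫ x in c..y, jacobiScaleDensity κ x ≤ (∫ x in c..y, (1 - x) ^ (-(1 + κ))) / c := by
    rw [← intervalIntegral.integral_div]
    exact intervalIntegral.integral_mono_on hcy hf (hg.div_const c) fun x hx => by
      rw [jacobiScaleDensity_eq_div (hIcc x hx)]
      exact div_le_div_of_nonneg_left (rpow_nonneg (sub_pos.mpr (hIcc x hx).2).le _) hc hx.1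
  have hQ : 0 < (1 - y) ^ κ := rpow_pos_of_pos (sub_pos.mpr hy) κ
  have hprimitive : κ * (∫ x in c..y, (1 - x) ^ (-(1 + κ))) * (1 - y) ^ κ =
      1 - (1 - c) ^ (-κ) * (1 - y) ^ κ := by
    rw [integral_one_sub_rpow_neg hκ.ne' hc1 hy, rpow_neg (sub_pos.mpr hy).le]
    field_simp
  rw [← hprimitive]
  constructor
  · gcongr
  · calc κ * (∫ x in c..y, jacobiScaleDensity κ x) * (1 - y) ^ κ
        ≤ κ * ((∫ x in c..y, (1 - x) ^ (-(1 + κ))) / c) * (1 - y) ^ κ := by gcongr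
      _ = κ * (∫ x in c..y, (1 - x) ^ (-(1 + κ))) * (1 - y) ^ κ / c := by ring

lemma mul_jacobiScale_mul_rpow_bounds (hκ : 0 < κ) {a c y : ℝ} (ha : a ∈ Ioo (0 : ℝ) 1)
    (hc : c ∈ Ioo (0 : ℝ) 1) (hcy : c ≤ y) (hy : y < 1) :
    κ * jacobiScale κ a c * (1 - y) ^ κ + (1 - (1 - c) ^ (-κ) * (1 - y) ^ κ) ≤
        κ * jacobiScale κ a y * (1 - y) ^ κ ∧
      κ * jacobiScale κ a y * (1 - y) ^ κ ≤
        κ * jacobiScale κ a c * (1 - y) ^ κ + (1 - (1 - c) ^ (-κ) * (1 - y) ^ κ) / c := by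
  have hsplit := jacobiScale_sub_jacobiScale (κ := κ) ha hc ⟨hc.1.trans_le hcy, hy⟩
  obtain ⟨hlower, hupper⟩ := jacobiScaleDensity_integral_bounds hκ hc.1 hcy hy
  have hexpand : κ * jacobiScale κ a y * (1 - y) ^ κ = κ * jacobiScale κ a c * (1 - y) ^ κ +
      κ * (∫ x in c..y, jacobiScaleDensity κ x) * (1 - y) ^ κ := by
    rw [← hsplit]; ring
  constructor <;> linarith

lemma tendsto_mul_jacobiScale_mul_rpow (hκ : 0 < κ) {a : ℝ} (ha : a ∈ Ioo (0 : ℝ) 1) :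
    Tendsto (fun y => κ * jacobiScale κ a y * (1 - y) ^ κ) (𝓝[<] 1) (𝓝 1) := by
  have hQ : Tendsto (fun y : ℝ => (1 - y) ^ κ) (𝓝[<] 1) (𝓝 0) := by
    have h : Continuous fun y : ℝ => (1 - y) ^ κ :=
      (continuous_const.sub continuous_id).rpow_const fun _ => Or.inr hκ.le
    simpa [zero_rpow hκ.ne'] using (h.tendsto 1).mono_left nhdsWithin_le_nhds
  have hlimit : ∀ c : ℝ, Tendsto (fun y => κ * jacobiScale κ a c * (1 - y) ^ κ +
      (1 - (1 - c) ^ (-κ) * (1 - y) ^ κ)) (𝓝[<] 1) (𝓝 1) ∧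
      Tendsto (fun y => κ * jacobiScale κ a c * (1 - y) ^ κ +
        (1 - (1 - c) ^ (-κ) * (1 - y) ^ κ) / c) (𝓝[<] 1) (𝓝 (1 / c)) := by
    intro c
    have hE := hQ.const_mul (κ * jacobiScale κ a c)
    have hD := (hQ.const_mul ((1 - c) ^ (-κ))).const_sub 1
    simp only [mul_zero, sub_zero] at hE hD
    simpa using And.intro (hE.add hD) (hE.add (hD.div_const c))
  refine tendsto_order.2 ⟨fun b hb => ?_, fun b hb => ?_⟩
  · filter_upwards [(hlimit a).1.eventually_const_lt hb, Ico_mem_nhdsLT ha.2] with y hlt hy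
    exact hlt.trans_le (mul_jacobiScale_mul_rpow_bounds hκ ha ha hy.1 hy.2).1
  · obtain ⟨c, hbc, hc1⟩ := exists_between (inv_lt_one_of_one_lt₀ hb)
    have hc : c ∈ Ioo (0 : ℝ) 1 := ⟨(inv_pos.2 (one_pos.trans hb)).trans hbc, hc1⟩
    have hcb : 1 / c < b := (one_div_lt hc.1 (one_pos.trans hb)).2 (by rwa [one_div])
    filter_upwards [(hlimit c).2.eventually_lt_const hcb, Ico_mem_nhdsLT hc.2] with y hlt hy
    exact (mul_jacobiScale_mul_rpow_bounds hκ ha hc hy.1 hy.2).2.trans_lt hlt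

end JacobiScale

lemma tendsto_atTop_nhdsLT_of_monotoneOn_of_rightInverse {S Sinv : ℝ → ℝ} {l r : ℝ}
    (hS : MonotoneOn S (Ioo l r)) (hmaps : ∀ u, Sinv u ∈ Ioo l r)
    (hinv : Function.RightInverse Sinv S) : Tendsto Sinv atTop (𝓝[<] r) := by
  refine tendsto_nhdsWithin_iff.2
    ⟨tendsto_order.2 ⟨fun b hb => ?_, fun b hb => .of_forall fun u => (hmaps u).2.trans hb⟩,
      .of_forall fun u => (hmaps u).2⟩
  obtain ⟨c, hbc, hcr⟩ := exists_between (max_lt hb ((hmaps 0).1.trans (hmaps 0).2))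
  have hc : c ∈ Ioo l r := ⟨(le_max_right b l).trans_lt hbc, hcr⟩
  filter_upwards [eventually_gt_atTop (S c)] with u hu
  by_contra! hub
  have := hS (hmaps u) hc (hub.trans ((le_max_left b l).trans hbc.le))
  rw [hinv u] at this
  exact this.not_gt hu

lemma mul_rpow_rpow_one_div {κ t x : ℝ} (hκ : κ ≠ 0) (ht : 0 ≤ t) (hx : 0 ≤ x) :
    (t * x ^ κ) ^ (1 / κ) = x * t ^ (1 / κ) := by
  rw [mul_rpow ht (rpow_nonneg hx κ), ← rpow_mul hx, mul_one_div_cancel hκ, rpow_one, mul_comm]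

/-- Let `S y = ∫_{α_κ}^{y} dx / (x (1-x)^{1+κ})` on `(0,1)`, a strictly
increasing continuous bijection onto `ℝ`, with inverse `Sinv`. Then
`1 - Sinv u ~ (κ u)^{-1/κ}` as `u → ∞`, i.e. `(1 - Sinv u) · (κ u)^{1/κ} → 1`. -/
theorem stmt3 (κ : ℝ) (hκ : 0 < κ) (Sinv : ℝ → ℝ)
    (hSinv : ∀ u : ℝ, Sinv u ∈ Set.Ioo (0 : ℝ) 1 ∧
      (∫ x in (1 / (4 + 2 * κ))..(Sinv u), 1 / (x * (1 - x) ^ (1 + κ))) = u) :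
    Tendsto (fun u : ℝ => (1 - Sinv u) * (κ * u) ^ (1 / κ)) atTop (nhds 1) := by
  have ha : 1 / (4 + 2 * κ) ∈ Ioo (0 : ℝ) 1 :=
    ⟨by positivity, by rw [div_lt_one (by positivity)]; linarith⟩
  have hinv : Function.RightInverse Sinv (jacobiScale κ (1 / (4 + 2 * κ))) := fun u => (hSinv u).2
  have hlim := ((tendsto_mul_jacobiScale_mul_rpow hκ ha).comp
    (tendsto_atTop_nhdsLT_of_monotoneOn_of_rightInverse (monotoneOn_jacobiScale ha)
      (fun u => (hSinv u).1) hinv)).rpow_const (p := 1 / κ) (Or.inr (by positivity))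
  rw [one_rpow] at hlim
  refine hlim.congr' ?_
  filter_upwards [eventually_ge_atTop 0] with u hu
  rw [Function.comp_apply, hinv u]
  exact mul_rpow_rpow_one_div hκ.ne' (by positivity) (sub_nonneg.2 (hSinv u).1.2.le)
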